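/- arXiv:1410.5888 — 2 statements merged into one kernel-verified Lean document; each statement's English description precedes it below -/
import Mathlib

section
/- Let p be an odd prime, f₁, f₂ odd positive integers, and ℓ an odd prime with ℓ ∤ p·f₁·f₂. Let α₁, α₂ be non-negative integers with max(α₁,α₂) ≥ 1. Then C_{p,f}(ℓ^{α₁}, ℓ^{α₂}) = ℓ^{max(α₁,α₂)−1}·(ℓ − 1 − (p/ℓ) − ((p−1)/ℓ)²) if α₁+α₂ is even, and C_{p,f}(ℓ^{α₁}, ℓ^{α₂}) = ℓ^{max(α₁,α₂)−1}·(−1 − ((p−1)/ℓ)²) if α₁+α₂ is odd, where (·/ℓ) denotes the Legendre symbol. -/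
/-!
Only the prime `ℓ` contributes to the product in `C_{p,f}(ℓ^{α₁}, ℓ^{α₂})`, and at `2` both
triples have `ν₂ = 2` and `S^{(2)} = 1`. Say `α₁ ≥ α₂`. The summation condition reduces to
`a₁ f₁² ≡ a₂ f₂² (mod ℓ^{α₂})`, which determines `a₂` modulo `4 ℓ^{α₂}` and forces
`(a₂/ℓ) = (a₁/ℓ)`; so the sum becomes `∑_{a₁ mod ℓ^{α₁}} (a₁/ℓ)^{α₁+α₂} C_p^{(ℓ)}(a₁)`.
Counting the pairs `(a₁, m)` the other way round, `a₁ ≡ D(p,m) f₁⁻²` is determined by `m`, and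
the sum is `ℓ^{α₁-1} ∑_{m ∈ 𝔽_ℓ^×} χ(D(p,m))^{α₁+α₂}`. With `x = p + 1 - m` we have
`D(p,m) = x² - 4p`: for odd exponents `∑_x χ(x² - 4p) = -1` (a Jacobi sum), for even exponents
the sum counts the `x` with `x² ≠ 4p`, that is `ℓ - 1 - (p/ℓ)`. Finally `m = 0` is removed, where
`D(p,0) = (p-1)²`.
-/

open scoped Classical

noncomputable section

/-- `D(m,n) := (m+1-n)^2 - 4m`. -/
def Dfun (m n : ℤ) : ℤ := (m + 1 - n) ^ 2 - 4 * m

/-- `C_p^{(ℓ)}(a,f,n)`: the number of units `m` modulo `ℓ^e`, where `e = ν_ℓ(4nf²)`,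
satisfying `D(p,m) ≡ a f² (mod ℓ^e)`. -/
def Cpl (p : ℕ) (a : ℤ) (f n ℓ : ℕ) : ℕ :=
  ((Finset.range (ℓ ^ ((4 * n * f ^ 2).factorization ℓ))).filter
    (fun m => Nat.Coprime m (ℓ ^ ((4 * n * f ^ 2).factorization ℓ)) ∧
      ((ℓ : ℤ) ^ ((4 * n * f ^ 2).factorization ℓ)) ∣
        (Dfun (p : ℤ) (m : ℤ) - a * (f : ℤ) ^ 2))).card

/-- The Kronecker symbol at the prime `2`: `0` for even `a`, `1` for `a ≡ ±1 (mod 8)`,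
`-1` for `a ≡ ±3 (mod 8)`. -/
def kron2 (a : ℤ) : ℤ := if 2 ∣ a then 0 else if a % 8 = 1 ∨ a % 8 = 7 then 1 else -1

/-- The Kronecker symbol `(a/n)`: completely multiplicative in `n`, equal to the Legendre
symbol at odd primes and to `kron2` at `2`, with `(a/1) = 1`. -/
def kron (a : ℤ) (n : ℕ) : ℤ :=
  (kron2 a) ^ (n.factorization 2) * jacobiSym a (n / 2 ^ (n.factorization 2))

/-- `S^{(2)}(a,n)`: `1` if `n` is odd, `2` if `n` is even and `a ≡ 5 (mod 8)`,
`0` otherwise. -/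
def S2fun (a n : ℕ) : ℤ := if ¬ (2 ∣ n) then 1 else if a % 8 = 5 then 2 else 0

/-- The triple `(a,f,n)` at the prime `ℓ`: `(a₁,f₁,n₁)` if `ν_ℓ(4n₁f₁²) ≥ ν_ℓ(4n₂f₂²)`
and `(a₂,f₂,n₂)` otherwise. -/
def sel (f₁ f₂ n₁ n₂ a₁ a₂ ℓ : ℕ) : ℕ × ℕ × ℕ :=
  if (4 * n₂ * f₂ ^ 2).factorization ℓ ≤ (4 * n₁ * f₁ ^ 2).factorization ℓ then (a₁, f₁, n₁)
  else (a₂, f₂, n₂)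

/-- `C_{p,f}(n₁,n₂)`: the sum over `a₁ ∈ (ℤ/4n₁ℤ)ˣ`, `a₂ ∈ (ℤ/4n₂ℤ)ˣ` with
`a₁ ≡ a₂ ≡ 1 (mod 4)` and `a₁f₁² ≡ a₂f₂² (mod gcd(4n₁f₁²,4n₂f₂²))` of
`(a₁/n₁)(a₂/n₂) S^{(2)}(a,n) ∏_{ℓ ∣ n₁n₂ odd} C_p^{(ℓ)}(a,f,n)`. -/
def Cpf (p f₁ f₂ n₁ n₂ : ℕ) : ℤ :=
  ∑ a₁ ∈ Finset.range (4 * n₁), ∑ a₂ ∈ Finset.range (4 * n₂),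
    if Nat.Coprime a₁ (4 * n₁) ∧ Nat.Coprime a₂ (4 * n₂) ∧ a₁ % 4 = 1 ∧ a₂ % 4 = 1 ∧
        (a₁ * f₁ ^ 2) % (Nat.gcd (4 * n₁ * f₁ ^ 2) (4 * n₂ * f₂ ^ 2)) =
          (a₂ * f₂ ^ 2) % (Nat.gcd (4 * n₁ * f₁ ^ 2) (4 * n₂ * f₂ ^ 2)) then
      kron (a₁ : ℤ) n₁ * kron (a₂ : ℤ) n₂ *
      S2fun (sel f₁ f₂ n₁ n₂ a₁ a₂ 2).1 (sel f₁ f₂ n₁ n₂ a₁ a₂ 2).2.2 *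
      ∏ ℓ ∈ ((n₁ * n₂).primeFactors.erase 2),
        ((Cpl p ((sel f₁ f₂ n₁ n₂ a₁ a₂ ℓ).1 : ℤ) (sel f₁ f₂ n₁ n₂ a₁ a₂ ℓ).2.1
            (sel f₁ f₂ n₁ n₂ a₁ a₂ ℓ).2.2 ℓ : ℤ))
    else 0

open Finset

section RangeSums

variable {R : Type*} [AddCommMonoid R]

theorem sum_range_mul_mod_mod {M N : ℕ} (hMN : M.Coprime N) (hM : 0 < M) (hN : 0 < N)
    (h : ℕ → ℕ → R) :
    ∑ a ∈ range (M * N), h (a % M) (a % N) = ∑ x ∈ range M, ∑ y ∈ range N, h x y := by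
  rw [← sum_product']
  refine sum_nbij' (fun a => (a % M, a % N)) (fun q => Nat.chineseRemainder hMN q.1 q.2)
    (fun a _ => by simp [Nat.mod_lt _ hM, Nat.mod_lt _ hN])
    (fun q _ => mem_range.2 (Nat.chineseRemainder_lt_mul hMN _ _ hM.ne' hN.ne'))
    (fun a ha => ?_) (fun q hq => ?_) (fun _ _ => rfl)
  · obtain ⟨h₁, h₂⟩ := (Nat.chineseRemainder hMN (a % M) (a % N)).2
    exact Nat.ModEq.eq_of_lt_of_lt ((Nat.modEq_and_modEq_iff_modEq_mul hMN).1
        ⟨h₁.trans (Nat.mod_modEq a M), h₂.trans (Nat.mod_modEq a N)⟩)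
      (Nat.chineseRemainder_lt_mul hMN _ _ hM.ne' hN.ne') (mem_range.1 ha)
  · obtain ⟨hx, hy⟩ := mem_product.1 hq
    obtain ⟨h₁, h₂⟩ := (Nat.chineseRemainder hMN q.1 q.2).2
    exact Prod.ext (Eq.trans h₁ (Nat.mod_eq_of_lt (mem_range.1 hx)))
      (Eq.trans h₂ (Nat.mod_eq_of_lt (mem_range.1 hy)))

theorem sum_range_mul_ite_mod_eq {M N u : ℕ} (hMN : M.Coprime N) (hu : u < M) (hN : 0 < N)
    (h : ℕ → R) :
    ∑ a ∈ range (M * N), (if a % M = u then h (a % N) else 0) = ∑ y ∈ range N, h y := by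
  rw [sum_range_mul_mod_mod (h := fun x y => if x = u then h y else 0) hMN (by omega) hN,
    sum_comm]
  simp [Finset.sum_ite_eq', hu]

theorem sum_range_mul_mod (K M : ℕ) (h : ℕ → R) :
    ∑ a ∈ range (K * M), h (a % M) = K • ∑ x ∈ range M, h x := by
  induction K with
  | zero => simp
  | succ K ih =>
    rw [Nat.succ_mul, sum_range_add, ih, succ_nsmul]
    congr 1
    refine sum_congr rfl fun x hx => ?_
    rw [Nat.mul_add_mod_self_right, Nat.mod_eq_of_lt (mem_range.1 hx)]

end RangeSums

theorem card_filter_range_dvd_sub_mul {q c : ℕ} (hq : q ≠ 0) (hc : c.Coprime q) (d : ℤ) :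
    #{y ∈ range q | (q : ℤ) ∣ d - (y : ℕ) * c} = 1 := by
  have : NeZero q := ⟨hq⟩
  set u := ZMod.unitOfCoprime c hc
  refine card_eq_one.2 ⟨((d : ZMod q) * ↑u⁻¹).val, ext fun y => ?_⟩
  rw [mem_filter, mem_range, mem_singleton, ← ZMod.intCast_zmod_eq_zero_iff_dvd]
  push_cast
  rw [sub_eq_zero, eq_comm, ← ZMod.coe_unitOfCoprime c hc, ← Units.eq_mul_inv_iff_mul_eq]
  constructor
  · rintro ⟨hy, h⟩
    rw [← h, ZMod.val_cast_of_lt hy]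
  · rintro rfl
    exact ⟨ZMod.val_lt _, ZMod.natCast_zmod_val _⟩

theorem sum_range_ite_dvd_sub_mul {M : Type*} [AddCommMonoid M] {q c : ℕ} (hq : q ≠ 0)
    (hc : c.Coprime q) (d : ℤ) {g : ℕ → M} {v : M} (hg : ∀ y : ℕ, (q : ℤ) ∣ d - y * c → g y = v) :
    ∑ y ∈ range q, (if (q : ℤ) ∣ d - y * c then g y else 0) = v := by
  rw [← sum_filter, sum_congr rfl fun y hy => hg y (mem_filter.1 hy).2, sum_const,
    card_filter_range_dvd_sub_mul hq hc d, one_smul]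

section QuadraticCharSums

variable {F : Type*} [Field F] [Fintype F] [DecidableEq F]

local notation "χ" => quadraticChar F

theorem quadraticChar_pow_of_odd {k : ℕ} (hk : Odd k) (a : F) :
    χ a ^ k = χ a := by
  rw [← MulChar.pow_apply' _ hk.pos.ne', (quadraticChar_isQuadratic F).pow_odd hk]

theorem quadraticChar_pow_of_even {k : ℕ} (hk : Even k) (hk0 : k ≠ 0) (a : F) :
    χ a ^ k = χ a ^ 2 := by
  rw [← MulChar.pow_apply' _ hk0, ← MulChar.pow_apply' _ two_ne_zero,
    (quadraticChar_isQuadratic F).pow_even hk, (quadraticChar_isQuadratic F).pow_even even_two]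

theorem quadraticChar_sq_eq_ite (a : F) :
    χ a ^ 2 = if a = 0 then 0 else 1 := by
  split_ifs with ha
  · simp [ha]
  · exact quadraticChar_sq_one ha

theorem sum_quadraticChar_mul_add (hF : ringChar F ≠ 2) {c : F} (hc : c ≠ 0) :
    ∑ y, χ y * χ (y + c) = -1 := by
  have hJ : jacobiSum χ χ = -χ (-1) := by
    simpa only [(quadraticChar_isQuadratic F).inv] using
      jacobiSum_nontrivial_inv (quadraticChar_ne_one hF)
  -- the substitution `y = -c x` turns the sum into `χ (-1)` times a Jacobi sum
  calc ∑ y, χ y * χ (y + c) = ∑ x, χ (-c * x) * χ (-c * x + c) :=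
        (Fintype.sum_equiv (Equiv.mulLeft₀ (-c) (neg_ne_zero.2 hc)) _ _ fun _ => rfl).symm
    _ = ∑ x, χ (-1) * (χ x * χ (1 - x)) := by
        refine sum_congr rfl fun x _ => ?_
        rw [show -c * x + c = c * (1 - x) by ring, show -c * x = -1 * c * x by ring,
          map_mul, map_mul, map_mul]
        linear_combination (χ (-1) * χ x * χ (1 - x)) * quadraticChar_sq_one hc
    _ = -1 := by
        rw [← mul_sum, ← jacobiSum, hJ, mul_neg, ← sq, quadraticChar_sq_one (by simp)]

theorem sum_quadraticChar_sq_add (hF : ringChar F ≠ 2) {c : F} (hc : c ≠ 0) :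
    ∑ x, χ (x ^ 2 + c) = -1 := by
  have hfiber (y : F) : ∑ x ∈ univ.filter (· ^ 2 = y), χ (x ^ 2 + c) = (χ y + 1) * χ (y + c) := by
    rw [sum_congr rfl fun x hx => by rw [(mem_filter.1 hx).2], sum_const, nsmul_eq_mul,
      ← quadraticChar_card_sqrts hF y, Set.toFinset_ofPred]
  calc ∑ x, χ (x ^ 2 + c) = ∑ y, (χ y * χ (y + c) + χ (y + c)) := by
        rw [← sum_fiberwise univ (· ^ 2)]
        exact sum_congr rfl fun y _ => by rw [hfiber]; ring
    _ = -1 := by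
        rw [sum_add_distrib, sum_quadraticChar_mul_add hF hc,
          Fintype.sum_equiv (Equiv.addRight c) (fun y => χ (y + c)) χ fun _ => rfl,
          quadraticChar_sum_zero hF, add_zero]

theorem sum_quadraticChar_sub_sq (hF : ringChar F ≠ 2) (c : F) :
    ∑ x, χ (x ^ 2 - c) ^ 2 = Fintype.card F - 1 - χ c := by
  simp only [quadraticChar_sq_eq_ite, sub_eq_zero, sum_ite, sum_const_zero, zero_add, sum_const,
    nsmul_one]
  have hcard := card_filter_add_card_filter_not (s := (univ : Finset F)) (· ^ 2 = c)
  have hsqrts := quadraticChar_card_sqrts hF c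
  rw [Set.toFinset_ofPred] at hsqrts
  rw [card_univ] at hcard
  have hcard' : (#{x | x ^ 2 = c} : ℤ) + #{x | ¬x ^ 2 = c} = Fintype.card F := by
    exact_mod_cast hcard
  linear_combination hcard' - hsqrts

/-- `(P + 1 - t) ^ 2 - 4 * P` is `D(P, t)` computed in `F`. -/
theorem sum_quadraticChar_discr_pow (hF : ringChar F ≠ 2) {P : F} (hP : P ≠ 0) {k : ℕ}
    (hk : k ≠ 0) :
    ∑ t ∈ univ.erase 0, χ ((P + 1 - t) ^ 2 - 4 * P) ^ k =
      if Even k then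
        Fintype.card F - 1 - χ P - χ (P - 1) ^ 2
      else -1 - χ (P - 1) ^ 2 := by
  have h2 : (2 : F) ≠ 0 := Ring.two_ne_zero hF
  have hχ4 (a : F) : χ (4 * a) = χ a := by
    rw [show (4 : F) = 2 ^ 2 by norm_num, map_mul, quadraticChar_sq_one' h2, one_mul]
  have hshift : ∑ t ∈ univ.erase 0, χ ((P + 1 - t) ^ 2 - 4 * P) ^ k =
      ∑ x, χ (x ^ 2 - 4 * P) ^ k - χ (P - 1) ^ 2 := by
    rw [sum_erase_eq_sub (mem_univ 0), sub_zero,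
      Fintype.sum_equiv (Equiv.subLeft (P + 1)) (fun t => χ ((P + 1 - t) ^ 2 - 4 * P) ^ k)
        (fun x => χ (x ^ 2 - 4 * P) ^ k) fun t => by simp,
      show (P + 1) ^ 2 - 4 * P = (P - 1) ^ 2 by ring, map_pow, ← pow_mul,
      quadraticChar_pow_of_even (even_two.mul_right k) (by positivity)]
  rw [hshift]
  split_ifs with hk2
  · simp only [quadraticChar_pow_of_even hk2 hk, sum_quadraticChar_sub_sq hF, hχ4]
  · have h4 : (4 : F) ≠ 0 := by
      rw [show (4 : F) = 2 * 2 by norm_num]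
      exact mul_ne_zero h2 h2
    simp only [quadraticChar_pow_of_odd (Nat.not_even_iff_odd.1 hk2), sub_eq_add_neg,
      sum_quadraticChar_sq_add hF (neg_ne_zero.2 (mul_ne_zero h4 hP))]

end QuadraticCharSums

theorem coprime_four_of_mod_four_eq_one {a : ℕ} (ha : a % 4 = 1) : a.Coprime 4 :=
  (ZMod.coprime_mod_iff_coprime a 4).1 (by rw [ha]; exact Nat.coprime_one_left 4)

theorem mul_sq_modEq_one_four {a F : ℕ} (ha : a % 4 = 1) (hF : Odd F) : a * F ^ 2 ≡ 1 [MOD 4] := by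
  obtain ⟨k, rfl⟩ := hF
  rw [Nat.ModEq, Nat.mul_mod, ha, show (2 * k + 1) ^ 2 = 4 * (k ^ 2 + k) + 1 by ring]
  omega

theorem factorization_prime_pow_mul {q n : ℕ} (hq : q.Prime) (hn : ¬ q ∣ n) (k : ℕ) :
    (q ^ k * n).factorization q = k := by
  rw [Nat.factorization_mul (pow_ne_zero _ hq.ne_zero) (by rintro rfl; exact hn (dvd_zero q)),
    Finsupp.add_apply, hq.factorization_pow, Finsupp.single_eq_same,
    Nat.factorization_eq_zero_of_not_dvd hn, add_zero]

theorem S2fun_of_odd {n : ℕ} (hn : Odd n) (a : ℕ) : S2fun a n = 1 := by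
  rw [S2fun, if_pos (by simpa [Nat.odd_iff, Nat.dvd_iff_mod_eq_zero] using hn)]

/-- `C_p^{(ℓ)}(a, F, n)` with the modulus `ℓ ^ ν_ℓ(4 n F²)` replaced by an arbitrary `q`. -/
def solCount (p F q : ℕ) (a : ℤ) : ℕ :=
  #{m ∈ range q | m.Coprime q ∧ (q : ℤ) ∣ Dfun p (m : ℕ) - a * F ^ 2}

theorem solCount_congr {p F q : ℕ} {a b : ℤ} (h : (q : ℤ) ∣ a - b) :
    solCount p F q a = solCount p F q b := by
  refine congrArg card (filter_congr fun m _ => and_congr_right fun _ => ?_)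
  refine dvd_iff_dvd_of_dvd_sub ?_
  rw [show Dfun p m - a * F ^ 2 - (Dfun p m - b * F ^ 2) = -((a - b) * F ^ 2) by ring]
  exact (h.mul_right _).neg_right

theorem Cpl_eq_solCount {p f n ℓ e : ℕ} (a : ℤ) (he : (4 * n * f ^ 2).factorization ℓ = e) :
    Cpl p a f n ℓ = solCount p f (ℓ ^ e) a := by
  subst he
  simp only [Cpl, solCount, Nat.cast_pow]

/-- The summation condition of `Cpf`. -/
def IsAdmissible (n₁ f₁ n₂ f₂ a₁ a₂ : ℕ) : Prop :=
  a₁.Coprime (4 * n₁) ∧ a₂.Coprime (4 * n₂) ∧ a₁ % 4 = 1 ∧ a₂ % 4 = 1 ∧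
    a₁ * f₁ ^ 2 ≡ a₂ * f₂ ^ 2 [MOD (4 * n₁ * f₁ ^ 2).gcd (4 * n₂ * f₂ ^ 2)]

theorem isAdmissible_comm {n₁ f₁ n₂ f₂ a₁ a₂ : ℕ} :
    IsAdmissible n₁ f₁ n₂ f₂ a₁ a₂ ↔ IsAdmissible n₂ f₂ n₁ f₁ a₂ a₁ := by
  unfold IsAdmissible
  rw [Nat.gcd_comm, Nat.ModEq.comm]
  tauto

section PrimeModulus

variable {ℓ : ℕ}

theorem jacobiSym_eq_zero_of_not_coprime (hℓ : ℓ.Prime) {y : ℕ} (hy : ¬ y.Coprime ℓ) :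
    jacobiSym y ℓ = 0 := by
  have : NeZero ℓ := ⟨hℓ.ne_zero⟩
  rwa [jacobiSym.eq_zero_iff_not_coprime, Int.gcd_natCast_natCast]

theorem jacobiSym_mul_sq (hℓ : ℓ.Prime) {F : ℕ} (hF : ¬ ℓ ∣ F) (x : ℤ) :
    jacobiSym (x * F ^ 2) ℓ = jacobiSym x ℓ := by
  have hF' : Int.gcd F ℓ = 1 := by
    rw [Int.gcd_natCast_natCast]
    exact (hℓ.coprime_iff_not_dvd.2 hF).symm
  rw [jacobiSym.mul_left, jacobiSym.sq_one' hF', mul_one]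

theorem jacobiSym_eq_of_dvd_sub_mul_sq (hℓ : ℓ.Prime) {F : ℕ} (hF : ¬ ℓ ∣ F) {d y : ℤ}
    (h : (ℓ : ℤ) ∣ d - y * F ^ 2) : jacobiSym y ℓ = jacobiSym d ℓ := by
  rw [← jacobiSym_mul_sq hℓ hF y]
  exact jacobiSym.mod_left' (Int.modEq_iff_dvd.2 h)

theorem jacobiSym_natCast_mod_pow {A : ℕ} (hA : A ≠ 0) (b : ℕ) :
    jacobiSym (b % ℓ ^ A : ℕ) ℓ = jacobiSym b ℓ := by
  refine jacobiSym.mod_left' ?_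
  rw [Int.natCast_mod, Int.emod_emod_of_dvd _ (by exact_mod_cast dvd_pow_self ℓ hA)]

theorem jacobiSym_pow_natCast_mod_pow (B b : ℕ) :
    jacobiSym (b % ℓ ^ B : ℕ) ℓ ^ B = jacobiSym b ℓ ^ B := by
  rcases Nat.eq_zero_or_pos B with rfl | hB
  · simp
  · rw [jacobiSym_natCast_mod_pow hB.ne']

theorem kron_prime_pow (hℓ : ℓ.Prime) (hℓ2 : ℓ ≠ 2) (a : ℤ) (α : ℕ) :
    kron a (ℓ ^ α) = jacobiSym a ℓ ^ α := by
  rw [kron, hℓ.factorization_pow, Finsupp.single_apply, if_neg hℓ2, pow_zero, one_mul, pow_zero,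
    Nat.div_one, jacobiSym.pow_right]

theorem coprime_four_pow (hℓ : ℓ.Prime) (hℓ2 : ℓ ≠ 2) (A : ℕ) : Nat.Coprime 4 (ℓ ^ A) :=
  Nat.Coprime.pow_right A ((Nat.coprime_primes Nat.prime_two hℓ).2 hℓ2.symm |>.pow_left 2)

theorem factorization_four_mul_pow_mul_sq_two (hℓ : ℓ.Prime) (hℓ2 : ℓ ≠ 2) {f : ℕ} (hf : Odd f)
    (α : ℕ) : (4 * ℓ ^ α * f ^ 2).factorization 2 = 2 := by
  rw [show 4 * ℓ ^ α * f ^ 2 = 2 ^ 2 * (ℓ ^ α * f ^ 2) by ring]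
  refine factorization_prime_pow_mul Nat.prime_two ?_ 2
  rw [← even_iff_two_dvd, Nat.not_even_iff_odd]
  exact ((hℓ.odd_of_ne_two hℓ2).pow).mul hf.pow

theorem factorization_four_mul_pow_mul_sq_self (hℓ : ℓ.Prime) (hℓ2 : ℓ ≠ 2) {f : ℕ}
    (hf : ¬ ℓ ∣ f) (α : ℕ) : (4 * ℓ ^ α * f ^ 2).factorization ℓ = α := by
  rw [show 4 * ℓ ^ α * f ^ 2 = ℓ ^ α * (2 ^ 2 * f ^ 2) by ring]
  refine factorization_prime_pow_mul hℓ ?_ α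
  intro h
  rcases hℓ.dvd_mul.1 h with h | h
  · exact hℓ2 ((Nat.prime_dvd_prime_iff_eq hℓ Nat.prime_two).1 (hℓ.dvd_of_dvd_pow h))
  · exact hf (hℓ.dvd_of_dvd_pow h)

theorem Cpf_prime_pow {p f₁ f₂ α₁ α₂ : ℕ} (hℓ : ℓ.Prime) (hℓ2 : ℓ ≠ 2) (hf₁ : Odd f₁)
    (hf₂ : Odd f₂) (hℓf₁ : ¬ ℓ ∣ f₁) (hℓf₂ : ¬ ℓ ∣ f₂) (hα : α₁ + α₂ ≠ 0) :
    Cpf p f₁ f₂ (ℓ ^ α₁) (ℓ ^ α₂) =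
      ∑ a₁ ∈ range (4 * ℓ ^ α₁), ∑ a₂ ∈ range (4 * ℓ ^ α₂),
        if IsAdmissible (ℓ ^ α₁) f₁ (ℓ ^ α₂) f₂ a₁ a₂ then
          jacobiSym a₁ ℓ ^ α₁ * jacobiSym a₂ ℓ ^ α₂ *
            (if α₂ ≤ α₁ then solCount p f₁ (ℓ ^ α₁) a₁ else solCount p f₂ (ℓ ^ α₂) a₂ : ℤ)
        else 0 := by
  have hprimes : (ℓ ^ α₁ * ℓ ^ α₂).primeFactors.erase 2 = {ℓ} := by
    rw [← pow_add, Nat.primeFactors_prime_pow hα hℓ]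
    exact erase_eq_of_notMem (by simpa using Ne.symm hℓ2)
  unfold Cpf
  refine sum_congr rfl fun a₁ _ => sum_congr rfl fun a₂ _ => if_congr Iff.rfl ?_ rfl
  simp only [sel, factorization_four_mul_pow_mul_sq_two hℓ hℓ2 hf₁,
    factorization_four_mul_pow_mul_sq_two hℓ hℓ2 hf₂,
    factorization_four_mul_pow_mul_sq_self hℓ hℓ2 hℓf₁,
    factorization_four_mul_pow_mul_sq_self hℓ hℓ2 hℓf₂, le_refl, if_true,
    S2fun_of_odd ((hℓ.odd_of_ne_two hℓ2).pow), hprimes, prod_singleton, kron_prime_pow hℓ hℓ2]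
  split_ifs
  · rw [Cpl_eq_solCount _ (factorization_four_mul_pow_mul_sq_self hℓ hℓ2 hℓf₁ α₁), mul_one]
  · rw [Cpl_eq_solCount _ (factorization_four_mul_pow_mul_sq_self hℓ hℓ2 hℓf₂ α₂), mul_one]

theorem gcd_four_mul_pow_mul_sq {A B F G : ℕ} (hBA : B ≤ A) (hG : G.Coprime ℓ) :
    (4 * ℓ ^ A * F ^ 2).gcd (4 * ℓ ^ B * G ^ 2) = 4 * (F ^ 2).gcd (G ^ 2) * ℓ ^ B := by
  rw [show 4 * ℓ ^ A * F ^ 2 = 4 * ℓ ^ B * (ℓ ^ (A - B) * F ^ 2) by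
      rw [← pow_mul_pow_sub ℓ hBA]; ring,
    Nat.gcd_mul_left, Nat.Coprime.gcd_mul_left_cancel _ ((hG.symm.pow _ _))]
  ring

theorem modEq_gcd_four_mul_pow_mul_sq_iff {A B F G a b : ℕ} (hℓ : ℓ.Coprime 2) (hBA : B ≤ A)
    (hF : Odd F) (hG : Odd G) (hGℓ : G.Coprime ℓ) (ha : a % 4 = 1) (hb : b % 4 = 1) :
    a * F ^ 2 ≡ b * G ^ 2 [MOD (4 * ℓ ^ A * F ^ 2).gcd (4 * ℓ ^ B * G ^ 2)] ↔
      a * F ^ 2 ≡ b * G ^ 2 [MOD ℓ ^ B] := by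
  have hF2 : (F ^ 2).Coprime 4 := (Nat.coprime_two_right.2 hF).pow 2 2
  rw [gcd_four_mul_pow_mul_sq hBA hGℓ, ← Nat.modEq_and_modEq_iff_modEq_mul, and_iff_right_iff_imp]
  · intro _
    -- both sides are `1` modulo `4` and `0` modulo `gcd (F ^ 2) (G ^ 2)`
    refine (Nat.modEq_and_modEq_iff_modEq_mul ?_).1
      ⟨(mul_sq_modEq_one_four ha hF).trans (mul_sq_modEq_one_four hb hG).symm, ?_⟩
    · exact (hF2.coprime_dvd_left (Nat.gcd_dvd_left _ _)).symm
    · exact ((Nat.modEq_zero_iff_dvd.2 ((Nat.gcd_dvd_left _ _).mul_left a)).trans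
        (Nat.modEq_zero_iff_dvd.2 ((Nat.gcd_dvd_right _ _).mul_left b)).symm)
  · refine Nat.Coprime.mul_left ?_ ?_
    · simpa using Nat.Coprime.pow 2 B hℓ.symm
    · exact Nat.Coprime.coprime_dvd_left (Nat.gcd_dvd_right _ _) ((hGℓ.pow 2 B))

theorem coprime_pow_of_mul_sq_modEq (hℓ : ℓ.Prime) {B F G a b : ℕ} (hℓF : ¬ ℓ ∣ F)
    (ha : a.Coprime ℓ) (h : b * G ^ 2 ≡ a * F ^ 2 [MOD ℓ ^ B]) : b.Coprime (ℓ ^ B) := by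
  rcases Nat.eq_zero_or_pos B with rfl | hB
  · exact Nat.coprime_one_right b
  refine Nat.Coprime.pow_right B (Nat.coprime_comm.1 (hℓ.coprime_iff_not_dvd.2 fun hb => ?_))
  have hmod : b * G ^ 2 ≡ a * F ^ 2 [MOD ℓ] := Nat.ModEq.of_dvd (dvd_pow_self ℓ hB.ne') h
  have hℓaF : ℓ ∣ a * F ^ 2 :=
    Nat.modEq_zero_iff_dvd.1 (hmod.symm.trans (Nat.modEq_zero_iff_dvd.2 (hb.mul_right _)))
  rcases hℓ.dvd_mul.1 hℓaF with h | h
  · exact hℓ.coprime_iff_not_dvd.1 ha.symm h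
  · exact hℓF (hℓ.dvd_of_dvd_pow h)

theorem isAdmissible_prime_pow_iff (hℓ : ℓ.Prime) (hℓ2 : ℓ ≠ 2) {A B F G a b : ℕ} (hBA : B ≤ A)
    (hF : Odd F) (hG : Odd G) (hℓF : ¬ ℓ ∣ F) (hℓG : ¬ ℓ ∣ G) (ha4 : a % 4 = 1)
    (ha : a.Coprime ℓ) :
    IsAdmissible (ℓ ^ A) F (ℓ ^ B) G a b ↔ b % 4 = 1 ∧ b * G ^ 2 ≡ a * F ^ 2 [MOD ℓ ^ B] := by
  have hℓ2' : ℓ.Coprime 2 := (Nat.coprime_primes hℓ Nat.prime_two).2 hℓ2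
  have hGℓ : G.Coprime ℓ := (hℓ.coprime_iff_not_dvd.2 hℓG).symm
  constructor
  · rintro ⟨-, -, -, hb4, hmod⟩
    exact ⟨hb4, ((modEq_gcd_four_mul_pow_mul_sq_iff hℓ2' hBA hF hG hGℓ ha4 hb4).1 hmod).symm⟩
  · rintro ⟨hb4, hmod⟩
    exact ⟨Nat.Coprime.mul_right (coprime_four_of_mod_four_eq_one ha4) (ha.pow_right A),
      Nat.Coprime.mul_right (coprime_four_of_mod_four_eq_one hb4)
        (coprime_pow_of_mul_sq_modEq hℓ hℓF ha hmod),
      ha4, hb4, (modEq_gcd_four_mul_pow_mul_sq_iff hℓ2' hBA hF hG hGℓ ha4 hb4).2 hmod.symm⟩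

theorem sum_range_isAdmissible_row (hℓ : ℓ.Prime) (hℓ2 : ℓ ≠ 2) {A B F G a : ℕ} (hBA : B ≤ A)
    (hF : Odd F) (hG : Odd G) (hℓF : ¬ ℓ ∣ F) (hℓG : ¬ ℓ ∣ G) (ha4 : a % 4 = 1)
    (ha : a.Coprime ℓ) :
    ∑ b ∈ range (4 * ℓ ^ B),
        (if IsAdmissible (ℓ ^ A) F (ℓ ^ B) G a b then jacobiSym b ℓ ^ B else 0) =
      jacobiSym a ℓ ^ B := by
  have hq : ℓ ^ B ≠ 0 := pow_ne_zero _ hℓ.ne_zero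
  have hmod (b : ℕ) : b * G ^ 2 ≡ a * F ^ 2 [MOD ℓ ^ B] ↔
      b % ℓ ^ B * G ^ 2 ≡ a * F ^ 2 [MOD ℓ ^ B] := by
    have h : b % ℓ ^ B * G ^ 2 ≡ b * G ^ 2 [MOD ℓ ^ B] := (Nat.mod_modEq b _).mul_right _
    exact ⟨h.trans, h.symm.trans⟩
  calc _ = ∑ b ∈ range (4 * ℓ ^ B), if b % 4 = 1 then
          (if b % ℓ ^ B * G ^ 2 ≡ a * F ^ 2 [MOD ℓ ^ B] then
            jacobiSym (b % ℓ ^ B : ℕ) ℓ ^ B else 0) else 0 := by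
        refine sum_congr rfl fun b _ => ?_
        rw [if_congr (isAdmissible_prime_pow_iff hℓ hℓ2 hBA hF hG hℓF hℓG ha4 ha) rfl rfl,
          ite_and, if_congr (hmod b) rfl rfl, jacobiSym_pow_natCast_mod_pow]
    _ = ∑ y ∈ range (ℓ ^ B),
          if y * G ^ 2 ≡ a * F ^ 2 [MOD ℓ ^ B] then jacobiSym y ℓ ^ B else 0 :=
        sum_range_mul_ite_mod_eq (h := fun y => if y * G ^ 2 ≡ a * F ^ 2 [MOD ℓ ^ B] then
            jacobiSym y ℓ ^ B else 0)
          (coprime_four_pow hℓ hℓ2 B) (by norm_num) (Nat.pos_of_ne_zero hq)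
    _ = jacobiSym a ℓ ^ B := by
        simp only [Nat.modEq_iff_dvd, Nat.cast_mul]
        refine sum_range_ite_dvd_sub_mul hq
          (Nat.Coprime.pow 2 B ((hℓ.coprime_iff_not_dvd.2 hℓG).symm)) _
          fun y hy => ?_
        rcases Nat.eq_zero_or_pos B with rfl | hB
        · simp
        have hℓy : (ℓ : ℤ) ∣ a * F ^ 2 - y * G ^ 2 := by
          have := (Int.natCast_dvd_natCast.2 (dvd_pow_self ℓ hB.ne')).trans hy
          push_cast at this
          exact this
        rw [jacobiSym_eq_of_dvd_sub_mul_sq hℓ hℓG hℓy, jacobiSym_mul_sq hℓ hℓF]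

theorem sum_range_four_mul_ite_mod_four (hℓ : ℓ.Prime) (hℓ2 : ℓ ≠ 2) {A : ℕ} (hA : A ≠ 0)
    (p F k : ℕ) :
    ∑ a ∈ range (4 * ℓ ^ A),
        (if a % 4 = 1 then jacobiSym a ℓ ^ k * (solCount p F (ℓ ^ A) a : ℤ) else 0) =
      ∑ y ∈ range (ℓ ^ A), jacobiSym y ℓ ^ k * (solCount p F (ℓ ^ A) y : ℤ) := by
  refine Eq.trans (sum_congr rfl fun a _ => ?_) (sum_range_mul_ite_mod_eq (u := 1)
    (h := fun y => jacobiSym y ℓ ^ k * (solCount p F (ℓ ^ A) y : ℤ)) (coprime_four_pow hℓ hℓ2 A)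
    (by norm_num) (pow_pos hℓ.pos A))
  have hsol : solCount p F (ℓ ^ A) ((a % ℓ ^ A : ℕ) : ℤ) = solCount p F (ℓ ^ A) a :=
    solCount_congr (by rw [Int.natCast_mod]; exact (Int.mod_modEq _ _).symm.dvd)
  rw [jacobiSym_natCast_mod_pow hA, hsol]

theorem sum_range_jacobiSym_pow_mul_solCount (hℓ : ℓ.Prime) {A F : ℕ} (hA : A ≠ 0)
    (hℓF : ¬ ℓ ∣ F) (p k : ℕ) :
    ∑ y ∈ range (ℓ ^ A), jacobiSym y ℓ ^ k * (solCount p F (ℓ ^ A) y : ℤ) =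
      ∑ m ∈ range (ℓ ^ A), if m.Coprime (ℓ ^ A) then jacobiSym (Dfun p m) ℓ ^ k else 0 := by
  simp only [solCount, natCast_card_filter, mul_sum, mul_ite, mul_one, mul_zero]
  rw [sum_comm]
  refine sum_congr rfl fun m _ => ?_
  simp only [ite_and, sum_ite_irrel, sum_const_zero]
  congr 1
  -- exactly one `y` solves `y F² ≡ D(p, m) (mod ℓ ^ A)`, and it has `(y/ℓ) = (D(p, m)/ℓ)`
  have := sum_range_ite_dvd_sub_mul (pow_ne_zero A hℓ.ne_zero)
    (Nat.Coprime.pow 2 A ((hℓ.coprime_iff_not_dvd.2 hℓF).symm)) (Dfun p m)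
    (g := fun y => jacobiSym y ℓ ^ k) (v := jacobiSym (Dfun p m) ℓ ^ k) fun y hy => by
      have hℓy : (ℓ : ℤ) ∣ Dfun p m - y * F ^ 2 := by
        have := (Int.natCast_dvd_natCast.2 (dvd_pow_self ℓ hA)).trans hy
        push_cast at this
        exact this
      rw [jacobiSym_eq_of_dvd_sub_mul_sq hℓ hℓF hℓy]
  simpa only [Nat.cast_pow] using this

theorem sum_range_pow_coprime_jacobiSym_Dfun {A : ℕ} (hA : A ≠ 0) (p k : ℕ) :
    ∑ m ∈ range (ℓ ^ A), (if m.Coprime (ℓ ^ A) then jacobiSym (Dfun p m) ℓ ^ k else 0) =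
      ℓ ^ (A - 1) * ∑ r ∈ range ℓ, if r.Coprime ℓ then jacobiSym (Dfun p r) ℓ ^ k else 0 := by
  have hsummand (m : ℕ) : (if m.Coprime (ℓ ^ A) then jacobiSym (Dfun p m) ℓ ^ k else 0) =
      if (m % ℓ).Coprime ℓ then jacobiSym (Dfun p (m % ℓ : ℕ)) ℓ ^ k else 0 := by
    have hm : (m : ℤ) ≡ (m % ℓ : ℕ) [ZMOD ℓ] := by
      rw [Int.natCast_mod]
      exact (Int.mod_modEq _ _).symm
    have hD : Dfun p m ≡ Dfun p (m % ℓ : ℕ) [ZMOD ℓ] := by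
      unfold Dfun
      gcongr
    rw [jacobiSym.mod_left' hD]
    exact if_congr ((Nat.coprime_pow_right_iff (Nat.pos_of_ne_zero hA) _ _).trans
      (ZMod.coprime_mod_iff_coprime _ _).symm) rfl rfl
  rw [sum_congr rfl fun m _ => hsummand m, ← pow_sub_one_mul hA, sum_range_mul_mod (h :=
    fun r => if r.Coprime ℓ then jacobiSym (Dfun p r) ℓ ^ k else 0), nsmul_eq_mul, Nat.cast_pow]

theorem sum_range_coprime_jacobiSym_Dfun_pow (hℓ : ℓ.Prime) (hℓ2 : ℓ ≠ 2) {p k : ℕ}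
    (hℓp : ¬ ℓ ∣ p) (hk : k ≠ 0) :
    ∑ r ∈ range ℓ, (if r.Coprime ℓ then jacobiSym (Dfun p r) ℓ ^ k else 0) =
      if Even k then (ℓ : ℤ) - 1 - jacobiSym p ℓ - jacobiSym (p - 1) ℓ ^ 2
      else -1 - jacobiSym (p - 1) ℓ ^ 2 := by
  have := Fact.mk hℓ
  have hchar : ringChar (ZMod ℓ) ≠ 2 := by rwa [ZMod.ringChar_zmod_n]
  have hP : (p : ZMod ℓ) ≠ 0 := by rwa [Ne, ZMod.natCast_eq_zero_iff]
  have hJ (x : ℤ) : jacobiSym x ℓ = quadraticChar (ZMod ℓ) x :=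
    (jacobiSym.legendreSym.to_jacobiSym ℓ x).symm
  have hsum := sum_quadraticChar_discr_pow hchar hP hk
  rw [ZMod.card] at hsum
  simp only [hJ, Int.cast_sub, Int.cast_natCast, Int.cast_one, ← hsum]
  rw [← sum_filter]
  refine sum_nbij' (fun r => (r : ZMod ℓ)) (fun t => t.val) (fun r hr => ?_) (fun t ht => ?_)
    (fun r hr => ?_) (fun t _ => ZMod.natCast_zmod_val t) (fun r _ => ?_)
  · rw [mem_erase, Ne, ZMod.natCast_eq_zero_iff]
    exact ⟨hℓ.coprime_iff_not_dvd.1 (mem_filter.1 hr).2.symm, mem_univ _⟩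
  · refine mem_filter.2 ⟨mem_range.2 (ZMod.val_lt t), Nat.coprime_comm.1
      (hℓ.coprime_iff_not_dvd.2 fun h => (mem_erase.1 ht).1 ?_)⟩
    rwa [← ZMod.natCast_zmod_val t, ZMod.natCast_eq_zero_iff]
  · exact ZMod.val_cast_of_lt (mem_range.1 (mem_filter.1 hr).1)
  · simp [Dfun]

theorem sum_isAdmissible_prime_pow (hℓ : ℓ.Prime) (hℓ2 : ℓ ≠ 2) {A B F G : ℕ} (hBA : B ≤ A)
    (hA : A ≠ 0) (hF : Odd F) (hG : Odd G) (hℓF : ¬ ℓ ∣ F) (hℓG : ¬ ℓ ∣ G) (p : ℕ) :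
    ∑ a ∈ range (4 * ℓ ^ A), ∑ b ∈ range (4 * ℓ ^ B),
        (if IsAdmissible (ℓ ^ A) F (ℓ ^ B) G a b then
          jacobiSym a ℓ ^ A * jacobiSym b ℓ ^ B * (solCount p F (ℓ ^ A) a : ℤ) else 0) =
      ℓ ^ (A - 1) *
        ∑ r ∈ range ℓ, if r.Coprime ℓ then jacobiSym (Dfun p r) ℓ ^ (A + B) else 0 := by
  have hrow (a : ℕ) : ∑ b ∈ range (4 * ℓ ^ B),
      (if IsAdmissible (ℓ ^ A) F (ℓ ^ B) G a b then
        jacobiSym a ℓ ^ A * jacobiSym b ℓ ^ B * (solCount p F (ℓ ^ A) a : ℤ) else 0) =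
      if a % 4 = 1 then jacobiSym a ℓ ^ (A + B) * (solCount p F (ℓ ^ A) a : ℤ) else 0 := by
    by_cases ha : a % 4 = 1 ∧ a.Coprime ℓ
    · rw [if_pos ha.1, pow_add, ← sum_range_isAdmissible_row hℓ hℓ2 hBA hF hG hℓF hℓG ha.1 ha.2,
        mul_sum, sum_mul]
      refine sum_congr rfl fun b _ => ?_
      split_ifs <;> ring
    · have hnot (b : ℕ) : ¬ IsAdmissible (ℓ ^ A) F (ℓ ^ B) G a b := fun hab =>
        ha ⟨hab.2.2.1, hab.1.coprime_dvd_right ((dvd_pow_self ℓ hA).mul_left 4)⟩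
      simp only [hnot, if_false, sum_const_zero]
      split_ifs with ha4
      · rw [jacobiSym_eq_zero_of_not_coprime hℓ fun h => ha ⟨ha4, h⟩, zero_pow (by omega),
          zero_mul]
      · rfl
  rw [sum_congr rfl fun a _ => hrow a, sum_range_four_mul_ite_mod_four hℓ hℓ2 hA,
    sum_range_jacobiSym_pow_mul_solCount hℓ hA hℓF, sum_range_pow_coprime_jacobiSym_Dfun hA]

end PrimeModulus

theorem Cpf_at_ell_coprime_general (p : ℕ)
    (f₁ f₂ : ℕ) (hf₁ : Odd f₁) (hf₂ : Odd f₂)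
    (ℓ : ℕ) (hℓ : ℓ.Prime) (hℓ2 : ℓ ≠ 2) (hℓnd : ¬ ℓ ∣ p * f₁ * f₂)
    (α₁ α₂ : ℕ) (hα : 1 ≤ max α₁ α₂) :
    (Even (α₁ + α₂) →
      Cpf p f₁ f₂ (ℓ ^ α₁) (ℓ ^ α₂) = (ℓ : ℤ) ^ (max α₁ α₂ - 1) *
        ((ℓ : ℤ) - 1 - jacobiSym (p : ℤ) ℓ - (jacobiSym ((p : ℤ) - 1) ℓ) ^ 2)) ∧
    (Odd (α₁ + α₂) →
      Cpf p f₁ f₂ (ℓ ^ α₁) (ℓ ^ α₂) = (ℓ : ℤ) ^ (max α₁ α₂ - 1) *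
        (-1 - (jacobiSym ((p : ℤ) - 1) ℓ) ^ 2)) := by
  have hℓp : ¬ ℓ ∣ p := fun h => hℓnd ((h.mul_right f₁).mul_right f₂)
  have hℓf₁ : ¬ ℓ ∣ f₁ := fun h => hℓnd ((h.mul_left p).mul_right f₂)
  have hℓf₂ : ¬ ℓ ∣ f₂ := fun h => hℓnd (h.mul_left _)
  have hCpf : Cpf p f₁ f₂ (ℓ ^ α₁) (ℓ ^ α₂) = ℓ ^ (max α₁ α₂ - 1) *
      ∑ r ∈ range ℓ, if r.Coprime ℓ then jacobiSym (Dfun p r) ℓ ^ (α₁ + α₂) else 0 := by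
    rw [Cpf_prime_pow hℓ hℓ2 hf₁ hf₂ hℓf₁ hℓf₂ (by omega)]
    by_cases h : α₂ ≤ α₁
    · simp only [h, if_true]
      rw [sum_isAdmissible_prime_pow hℓ hℓ2 h (by omega) hf₁ hf₂ hℓf₁ hℓf₂, max_eq_left h]
    · simp only [h, if_false]
      rw [sum_comm]
      simp only [isAdmissible_comm (n₁ := ℓ ^ α₁), mul_comm (jacobiSym _ ℓ ^ α₁)]
      rw [sum_isAdmissible_prime_pow hℓ hℓ2 (by omega) (by omega) hf₂ hf₁ hℓf₂ hℓf₁,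
        max_eq_right (by omega), add_comm α₂]
  rw [hCpf, sum_range_coprime_jacobiSym_Dfun_pow hℓ hℓ2 hℓp (by omega)]
  exact ⟨fun h => by rw [if_pos h], fun h => by rw [if_neg (Nat.not_even_iff_odd.2 h)]⟩

/-- Lemma 3.4 (iv): for an odd prime `ℓ ∤ p f₁ f₂` and `max(α₁,α₂) ≥ 1`,
`C_{p,f}(ℓ^{α₁},ℓ^{α₂}) = ℓ^{max(α₁,α₂)-1}(ℓ-1-(p/ℓ)-((p-1)/ℓ)²)` if `α₁+α₂` is even and
`ℓ^{max(α₁,α₂)-1}(-1-((p-1)/ℓ)²)` if `α₁+α₂` is odd. -/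
theorem Cpf_at_ell_coprime (p : ℕ) (hp : p.Prime) (hp2 : p ≠ 2)
    (f₁ f₂ : ℕ) (hf₁ : Odd f₁) (hf₂ : Odd f₂) (hf₁0 : 0 < f₁) (hf₂0 : 0 < f₂)
    (ℓ : ℕ) (hℓ : ℓ.Prime) (hℓ2 : ℓ ≠ 2) (hℓnd : ¬ ℓ ∣ p * f₁ * f₂)
    (α₁ α₂ : ℕ) (hα : 1 ≤ max α₁ α₂) :
    (Even (α₁ + α₂) →
      Cpf p f₁ f₂ (ℓ ^ α₁) (ℓ ^ α₂) = (ℓ : ℤ) ^ (max α₁ α₂ - 1) *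
        ((ℓ : ℤ) - 1 - jacobiSym (p : ℤ) ℓ - (jacobiSym ((p : ℤ) - 1) ℓ) ^ 2)) ∧
    (Odd (α₁ + α₂) →
      Cpf p f₁ f₂ (ℓ ^ α₁) (ℓ ^ α₂) = (ℓ : ℤ) ^ (max α₁ α₂ - 1) *
        (-1 - (jacobiSym ((p : ℤ) - 1) ℓ) ^ 2)) :=
  Cpf_at_ell_coprime_general p f₁ f₂ hf₁ hf₂ ℓ hℓ hℓ2 hℓnd α₁ α₂ hα
end
end

section
/- Let Δ < 0 be a fundamental discriminant, i.e. Δ is the discriminant of an imaginary quadratic field, and let p be a prime. Then the number of pairs (m,n) ∈ ℤ × ℤ satisfying n² − Δm² = 4p is at most 12. -/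
/-!
A solution `(m, n)` gives the algebraic integer `α = (n + m √Δ) / 2` of `K`, of absolute
norm `p`, with `α ᾱ = p`, where `ᾱ` comes from the solution `(-m, n)`. Fix one solution, with
integer `π`. Having prime norm, `π` is prime, and it divides `α ᾱ = π π̄`, so every `α` is
associated to `π` or to `π̄`. Since `(m, n) ↦ α` is injective, there are at most twice as many
solutions as units. All units of an imaginary quadratic field are roots of unity, and a root of
unity of order `w` in a quadratic field has `φ(w) ≤ 2`, so `w ≤ 6`.
-/

open NumberField NumberField.InfinitePlace NumberField.Units Module

theorem Nat.dvd_twelve_of_totient_le_two {n : ℕ} (hn : n ≠ 0) (h : n.totient ≤ 2) : n ∣ 12 := by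
  refine (Nat.dvd_iff_prime_pow_dvd_dvd 12 n).mpr fun q k hq hqk => ?_
  rcases k.eq_zero_or_pos with rfl | hk
  · simp
  have htot : q ^ (k - 1) * (q - 1) ≤ 2 := by
    rw [← Nat.totient_prime_pow hq hk]
    exact (Nat.le_of_dvd (Nat.totient_pos.mpr (Nat.pos_of_ne_zero hn))
      (Nat.totient_dvd_of_dvd hqk)).trans h
  have hq2 := hq.two_le
  have hq3 : q ≤ 3 := by
    have := Nat.le_mul_of_pos_left (q - 1) (Nat.pow_pos (n := k - 1) hq.pos)
    omega
  interval_cases q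
  · have hk2 : k ≤ 2 := by
      by_contra! hk2
      have := Nat.pow_le_pow_right (n := 2) (by norm_num) (show 2 ≤ k - 1 by omega)
      omega
    exact (Nat.pow_dvd_pow 2 hk2).trans (by norm_num)
  · have hk1 : k = 1 := by
      by_contra! hk1
      have := Nat.pow_le_pow_right (n := 3) (by norm_num) (show 1 ≤ k - 1 by omega)
      omega
    subst hk1
    norm_num

theorem Nat.le_six_of_totient_le_two {n : ℕ} (h : n.totient ≤ 2) : n ≤ 6 := by
  rcases eq_or_ne n 0 with rfl | hn
  · norm_num
  have h12 := Nat.dvd_twelve_of_totient_le_two hn h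
  have : n ≤ 12 := Nat.le_of_dvd (by norm_num) h12
  interval_cases n <;> simp_all +decide

theorem card_le_two_mul_card_units_of_forall_associated {M T : Type*} [CommMonoid M]
    [Finite Mˣ] {f : T → M} (hf : Function.Injective f) (a b : M)
    (h : ∀ t, Associated a (f t) ∨ Associated b (f t)) : Nat.card T ≤ 2 * Nat.card Mˣ := by
  have : ∀ t, ∃ e : Bool × Mˣ, cond e.1 a b * e.2 = f t := fun t => by
    rcases h t with ⟨u, hu⟩ | ⟨u, hu⟩
    exacts [⟨(true, u), hu⟩, ⟨(false, u), hu⟩]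
  choose e he using this
  have he_inj : Function.Injective e := fun t t' htt' => hf (by rw [← he, ← he, htt'])
  calc Nat.card T ≤ Nat.card (Bool × Mˣ) := Nat.card_le_card_of_injective e he_inj
    _ = 2 * Nat.card Mˣ := by simp [Nat.card_prod]

theorem Complex.sq_norm_add_mul_of_sq_eq_ofReal {z : ℂ} {d : ℝ} (hz : z ^ 2 = d) (hd : d ≤ 0)
    (a b : ℝ) : ‖a + b * z‖ ^ 2 = a ^ 2 - d * b ^ 2 := by
  have hre := congrArg Complex.re hz
  have him := congrArg Complex.im hz
  simp only [sq, mul_re, mul_im, ofReal_re, ofReal_im] at hre him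
  have hz_re : z.re = 0 := by
    rcases mul_eq_zero.mp (show z.re * z.im = 0 by linarith) with h | h
    · exact h
    · exact mul_self_eq_zero.mp (le_antisymm (by nlinarith) (mul_self_nonneg _))
  rw [hz_re] at hre
  rw [Complex.sq_norm, normSq_apply]
  simp only [add_re, add_im, mul_re, mul_im, ofReal_re, ofReal_im, hz_re]
  linear_combination (-b ^ 2) * hre

namespace NumberField

variable {K : Type*} [Field K]

theorem isTotallyComplex_of_sq_eq {s : K} {d : ℚ} (hs : s ^ 2 = d) (hd : d < 0) :
    IsTotallyComplex K where
  isComplex w := by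
    rw [isComplex_iff]
    intro hw
    have h := congrArg (ComplexEmbedding.IsReal.embedding hw) hs
    rw [map_pow, map_ratCast] at h
    have := sq_nonneg (ComplexEmbedding.IsReal.embedding hw s)
    rw [h] at this
    exact absurd (Rat.cast_nonneg.mp this) hd.not_ge

variable [NumberField K]

theorem Units.totient_torsionOrder_le_finrank : (torsionOrder K).totient ≤ finrank ℚ K := by
  obtain ⟨μ, hμ⟩ : ∃ μ : torsion K, orderOf μ = torsionOrder K :=
    IsCyclic.exists_ofOrder_eq_natCard
  rw [← IsPrimitiveRoot.iff_orderOf, ← IsPrimitiveRoot.coe_submonoidClass_iff,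
    ← IsPrimitiveRoot.coe_units_iff] at hμ
  replace hμ := hμ.map_of_injective (FaithfulSMul.algebraMap_injective (𝓞 K) K)
  simpa using hμ.lcm_totient_le_finrank hμ
    (Polynomial.cyclotomic.irreducible_rat (by simpa using torsionOrder_pos K))

theorem Units.torsionOrder_le_six_of_finrank_eq_two (h : finrank ℚ K = 2) :
    torsionOrder K ≤ 6 :=
  Nat.le_six_of_totient_le_two (h ▸ totient_torsionOrder_le_finrank)

theorem abs_norm_eq_pow_mult [Subsingleton (InfinitePlace K)] (w : InfinitePlace K) (x : K) :
    ((|Algebra.norm ℚ x| : ℚ) : ℝ) = w x ^ w.mult := by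
  rw [← prod_eq_abs_norm, Fintype.prod_subsingleton _ w]

theorem Units.torsion_eq_top [Subsingleton (InfinitePlace K)] : torsion K = ⊤ := by
  refine eq_top_iff.mpr fun u _ => (mem_torsion K).mpr fun w => ?_
  have h := abs_norm_eq_pow_mult w (u : K)
  rwa [Units.norm, Rat.cast_one, eq_comm,
    pow_eq_one_iff_of_nonneg (by positivity) w.mult_ne_zero] at h

theorem subsingleton_infinitePlace_of_finrank_eq_two [IsTotallyComplex K]
    (h : finrank ℚ K = 2) : Subsingleton (InfinitePlace K) := by
  rw [← Fintype.card_le_one_iff_subsingleton, card_eq_nrRealPlaces_add_nrComplexPlaces,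
    IsTotallyComplex.nrRealPlaces_eq_zero]
  have := IsTotallyComplex.finrank K
  omega

theorem Units.finite_of_finrank_eq_two [IsTotallyComplex K] (h : finrank ℚ K = 2) :
    Finite (𝓞 K)ˣ := by
  have := subsingleton_infinitePlace_of_finrank_eq_two h
  have : Finite (⊤ : Subgroup (𝓞 K)ˣ) := torsion_eq_top (K := K) ▸ inferInstance
  exact Finite.of_equiv _ Subgroup.topEquiv.toEquiv

theorem Units.card_le_six_of_finrank_eq_two [IsTotallyComplex K] (h : finrank ℚ K = 2) :
    Nat.card (𝓞 K)ˣ ≤ 6 := by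
  have := subsingleton_infinitePlace_of_finrank_eq_two h
  rw [← Subgroup.card_top, ← torsion_eq_top]
  exact torsionOrder_le_six_of_finrank_eq_two h

theorem abs_norm_eq_norm_sq_of_finrank_eq_two [IsTotallyComplex K] (h : finrank ℚ K = 2)
    (φ : K →+* ℂ) (x : K) : ((|Algebra.norm ℚ x| : ℚ) : ℝ) = ‖φ x‖ ^ 2 := by
  have := subsingleton_infinitePlace_of_finrank_eq_two h
  rw [abs_norm_eq_pow_mult (InfinitePlace.mk φ), IsTotallyComplex.mult_eq, InfinitePlace.apply]

namespace RingOfIntegers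

theorem prime_of_abs_norm_eq_prime {x : 𝓞 K} {p : ℕ} (hp : p.Prime)
    (h : |Algebra.norm ℚ (x : K)| = p) : Prime x := by
  have hx : x ≠ 0 := by
    rintro rfl
    exact hp.ne_zero (by simpa [eq_comm] using h)
  have hnorm : ((Algebra.norm ℤ x).natAbs : ℚ) = p := by
    rw [Nat.cast_natAbs, Int.cast_abs, Algebra.coe_norm_int, h]
  refine Ideal.prime_of_irreducible_absNorm_span hx ?_
  rw [Ideal.absNorm_span_singleton, (by exact_mod_cast hnorm : (Algebra.norm ℤ x).natAbs = p)]
  exact hp.prime.irreducible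

theorem isUnit_of_abs_norm_mul_eq {c γ : 𝓞 K} (hc : c ≠ 0)
    (h : |Algebra.norm ℚ ((c * γ : 𝓞 K) : K)| = |Algebra.norm ℚ (c : K)|) : IsUnit γ := by
  rw [NumberField.isUnit_iff_norm, RingOfIntegers.coe_norm]
  have hc' : |Algebra.norm ℚ (c : K)| ≠ 0 := by
    simpa [Algebra.norm_eq_zero_iff] using hc
  push_cast at h
  rw [map_mul, abs_mul] at h
  exact (mul_eq_left₀ hc').mp h

theorem associated_or_associated_of_mul_eq_mul {a b c d : 𝓞 K} (h : a * b = c * d)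
    (hc : Prime c) (ha : |Algebra.norm ℚ (a : K)| = |Algebra.norm ℚ (c : K)|)
    (hb : |Algebra.norm ℚ (b : K)| = |Algebra.norm ℚ (c : K)|) :
    Associated c a ∨ Associated d a := by
  rcases hc.dvd_or_dvd ⟨d, h⟩ with ⟨γ, rfl⟩ | ⟨γ, rfl⟩
  · exact Or.inl (associated_mul_unit_right c γ (isUnit_of_abs_norm_mul_eq hc.ne_zero ha))
  · have hγ := isUnit_of_abs_norm_mul_eq hc.ne_zero hb
    have had : a * γ = d := mul_left_cancel₀ hc.ne_zero (by rw [← h]; ring)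
    exact Or.inr (had ▸ associated_mul_unit_right a γ hγ).symm

end RingOfIntegers

end NumberField

theorem isIntegral_half_add_mul {K : Type*} [Field K] [CharZero K] {s : K} {Δ c m n : ℤ}
    (hs : s ^ 2 = Δ) (h : n ^ 2 - Δ * m ^ 2 = 4 * c) : IsIntegral ℤ ((n + m * s) / 2) := by
  refine ⟨Polynomial.X ^ 2 - Polynomial.C n * Polynomial.X + Polynomial.C c, by monicity!, ?_⟩
  have h' : (n : K) ^ 2 - Δ * m ^ 2 = 4 * c := by exact_mod_cast congrArg (Int.cast : ℤ → K) h
  simp only [Polynomial.eval₂_add, Polynomial.eval₂_sub, Polynomial.eval₂_mul,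
    Polynomial.eval₂_pow, Polynomial.eval₂_X, Polynomial.eval₂_C]
  simp only [algebraMap_int_eq, eq_intCast]
  linear_combination (-1 / 4 : K) * h' + (m ^ 2 / 4 : K) * hs

abbrev NormFormSolution (Δ c : ℤ) : Type := {mn : ℤ × ℤ // mn.2 ^ 2 - Δ * mn.1 ^ 2 = 4 * c}

namespace NormFormSolution

variable {Δ c : ℤ}

def conj (x : NormFormSolution Δ c) : NormFormSolution Δ c :=
  ⟨(-x.1.1, x.1.2), by simpa only [neg_sq] using x.2⟩

variable {K : Type*} [Field K] [CharZero K] {s : K}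

def toInteger (hs : s ^ 2 = Δ) (x : NormFormSolution Δ c) : 𝓞 K :=
  ⟨(x.1.2 + x.1.1 * s) / 2, isIntegral_half_add_mul hs x.2⟩

theorem coe_toInteger (hs : s ^ 2 = Δ) (x : NormFormSolution Δ c) :
    (x.toInteger hs : K) = (x.1.2 + x.1.1 * s) / 2 := rfl

theorem toInteger_mul_toInteger_conj (hs : s ^ 2 = Δ) (x : NormFormSolution Δ c) :
    x.toInteger hs * x.conj.toInteger hs = c := by
  ext
  have h : (x.1.2 : K) ^ 2 - Δ * x.1.1 ^ 2 = 4 * c := by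
    exact_mod_cast congrArg (Int.cast : ℤ → K) x.2
  simp only [map_mul, map_intCast, ← RingOfIntegers.coe_eq_algebraMap, coe_toInteger, conj,
    Int.cast_neg]
  linear_combination (1 / 4 : K) * h - (x.1.1 ^ 2 / 4 : K) * hs

theorem toInteger_injective (hs : s ^ 2 = Δ) (hΔ : Δ < 0) :
    Function.Injective (toInteger (c := c) hs) := by
  intro x y hxy
  have h : ((x.1.2 - y.1.2 : ℤ) : K) = ((y.1.1 - x.1.1 : ℤ) : K) * s := by
    have := congrArg ((↑) : 𝓞 K → K) hxy
    simp only [coe_toInteger] at this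
    push_cast
    linear_combination 2 * this
  have hsq : (x.1.2 - y.1.2) ^ 2 = (y.1.1 - x.1.1) ^ 2 * Δ := by
    have := congrArg (· ^ 2) h
    simp only [mul_pow, hs] at this
    exact_mod_cast this
  have hm : x.1.1 = y.1.1 := by nlinarith [sq_nonneg (x.1.2 - y.1.2), sq_nonneg (y.1.1 - x.1.1)]
  have hn : x.1.2 = y.1.2 := by nlinarith [sq_nonneg (x.1.2 - y.1.2)]
  exact Subtype.ext (Prod.ext hm hn)

theorem abs_norm_toInteger [NumberField K] [IsTotallyComplex K] (h : finrank ℚ K = 2)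
    (hs : s ^ 2 = Δ) (hΔ : Δ ≤ 0) (x : NormFormSolution Δ c) :
    |Algebra.norm ℚ (x.toInteger hs : K)| = c := by
  let φ : K →+* ℂ := (Classical.arbitrary (InfinitePlace K)).embedding
  have hφs : φ s ^ 2 = ((Δ : ℝ) : ℂ) := by rw [← map_pow, hs]; simp
  have hφx : φ (x.toInteger hs) = ((x.1.2 : ℝ) + (x.1.1 : ℝ) * φ s) / 2 := by
    simp [coe_toInteger, map_ofNat φ 2]
  have key := abs_norm_eq_norm_sq_of_finrank_eq_two h φ (x.toInteger hs)
  rw [hφx, norm_div, div_pow, Complex.norm_ofNat,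
    Complex.sq_norm_add_mul_of_sq_eq_ofReal hφs (by exact_mod_cast hΔ)] at key
  have hx : ((x.1.2 : ℝ) ^ 2 - Δ * x.1.1 ^ 2) = 4 * c := by exact_mod_cast x.2
  rw [hx] at key
  exact_mod_cast (key.trans (by push_cast; ring) :
    ((|Algebra.norm ℚ (x.toInteger hs : K)| : ℚ) : ℝ) = ((c : ℚ) : ℝ))

end NormFormSolution

open NormFormSolution NumberField.RingOfIntegers

theorem norm_form_solutions_le_twelve_general (Δ : ℤ) (hneg : Δ < 0)
    (K : Type) [Field K] [NumberField K]
    (hrank : Module.finrank ℚ K = 2) (hsq : ∃ α : K, α ^ 2 = (Δ : K))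
    (p : ℕ) (hp : p.Prime) :
    Nat.card {mn : ℤ × ℤ // mn.2 ^ 2 - Δ * mn.1 ^ 2 = 4 * (p : ℤ)} ≤ 12 := by
  obtain ⟨s, hs⟩ := hsq
  have : IsTotallyComplex K :=
    isTotallyComplex_of_sq_eq (d := Δ) (by simpa using hs) (by exact_mod_cast hneg)
  have := Units.finite_of_finrank_eq_two hrank
  change Nat.card (NormFormSolution Δ p) ≤ 12
  rcases isEmpty_or_nonempty (NormFormSolution Δ p) with hT | hT
  · simp
  obtain ⟨y⟩ := hT
  have hnorm (x : NormFormSolution Δ p) : |Algebra.norm ℚ (x.toInteger hs : K)| = p := by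
    exact_mod_cast abs_norm_toInteger hrank hs hneg.le x
  have hπ : Prime (y.toInteger hs) := prime_of_abs_norm_eq_prime hp (hnorm y)
  have hassoc (x : NormFormSolution Δ p) :
      Associated (y.toInteger hs) (x.toInteger hs) ∨
        Associated (y.conj.toInteger hs) (x.toInteger hs) :=
    associated_or_associated_of_mul_eq_mul
      (by rw [toInteger_mul_toInteger_conj, toInteger_mul_toInteger_conj]) hπ
      ((hnorm x).trans (hnorm y).symm) ((hnorm x.conj).trans (hnorm y).symm)
  calc Nat.card (NormFormSolution Δ p)
      ≤ 2 * Nat.card (𝓞 K)ˣ :=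
        card_le_two_mul_card_units_of_forall_associated (toInteger_injective hs hneg) _ _ hassoc
    _ ≤ 12 := by linarith [Units.card_le_six_of_finrank_eq_two hrank]

/-- For a fundamental discriminant `Δ < 0` (the discriminant of an imaginary quadratic
field) and a prime `p`, the equation `n² − Δm² = 4p` has at most 12 integer
solutions `(m,n)`. -/
theorem norm_form_solutions_le_twelve (Δ : ℤ) (hneg : Δ < 0)
    (K : Type) [Field K] [NumberField K]
    (hrank : Module.finrank ℚ K = 2) (hsq : ∃ α : K, α ^ 2 = (Δ : K))
    (hdisc : NumberField.discr K = Δ)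
    (p : ℕ) (hp : p.Prime) :
    Nat.card {mn : ℤ × ℤ // mn.2 ^ 2 - Δ * mn.1 ^ 2 = 4 * (p : ℤ)} ≤ 12 :=
  norm_form_solutions_le_twelve_general Δ hneg K hrank hsq p hp
end
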